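/- Mackey formula with involutions: Let K ⊆ H be subgroups of a finite group G, ρ an irreducible complex representation of K, ϑ an H-orbit of order-two automorphisms of G, and χ = (χ_θ)_{θ∈ϑ} a compatible family of characters χ_θ : H^θ → ℂ×. Then dim Hom_{H^θ}(Ind_K^H ρ, χ_θ) = Σ_ξ m_K^H(ξ) · dim Hom_{K ∩ H^{θ'}}(ρ, χ_{θ'}), where ξ runs over the K-orbits contained in ϑ, θ' is any element of ξ, and m_K^H(ξ) = [H_{θ'} : (K ∩ H_{θ'})H^{θ'}]. -/

import Mathlib

/-!
A form `l ∈ Hom_{H^θ}(Ind_K^H ρ, χ_θ)` is determined by the family `F h = l ∘ single h`, where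
`single h v` is the function supported on `K h` with value `ρ(x h⁻¹) v` at `x`; averaging over `H`
inverts this, and the families that arise are exactly those with
`F (k h t) = χ_θ(t⁻¹) • F h ∘ ρ(k⁻¹)` for `k ∈ K`, `t ∈ H^θ`. Such an `F` is free on a set of
representatives `s` of `K \ H / H^θ`: compatibility of `χ` says that `F s` must lie in
`Hom_{K ∩ H^{s·θ}}(ρ, χ_{s·θ})`, and multiplicativity of `χ_θ` makes every such choice extend.
The dimension of that space only depends on the `K`-orbit of `s·θ` (compose with `ρ(k)`), and for
`ψ = h₀·θ` the double cosets `K s H^θ` with `s·θ ∈ K·ψ` correspond to `H_ψ / (K ∩ H_ψ) H^ψ` via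
`w ↦ K w⁻¹ h₀ H^θ`, which produces the multiplicity `m_K^H(ψ)`.
-/

namespace Stmt7

variable {G : Type*} [Group G]

/-- The action of `g` on automorphisms: `(g · θ)(h) = g θ(g⁻¹ h g) g⁻¹`. -/
def conjAct (g : G) (θ : MulAut G) : MulAut G := MulAut.conj g * θ * (MulAut.conj g)⁻¹

/-- The fixed points `G^θ` of `θ`, as a subgroup. -/
def fixedSub (θ : MulAut G) : Subgroup G where
  carrier := {g | θ g = g}
  one_mem' := map_one θ
  mul_mem' := by
    intro a b ha hb
    simp only [Set.mem_setOf_eq, map_mul] at *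
    rw [ha, hb]
  inv_mem' := by
    intro a ha
    simp only [Set.mem_setOf_eq, map_inv] at *
    rw [ha]

/-- The stabilizer `G_θ = {g : g · θ = θ}` of `θ` under the conjugation action. -/
def stabSub (θ : MulAut G) : Subgroup G where
  carrier := {g | conjAct g θ = θ}
  one_mem' := by simp [conjAct]
  mul_mem' := by
    intro a b ha hb
    simp only [Set.mem_setOf_eq, conjAct, map_mul, mul_inv_rev] at *
    calc MulAut.conj a * MulAut.conj b * θ * ((MulAut.conj b)⁻¹ * (MulAut.conj a)⁻¹)
        = MulAut.conj a * (MulAut.conj b * θ * (MulAut.conj b)⁻¹) * (MulAut.conj a)⁻¹ := by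
          group
      _ = θ := by rw [hb]; exact ha
  inv_mem' := by
    intro a ha
    simp only [Set.mem_setOf_eq, conjAct, map_inv, inv_inv] at *
    rw [mul_inv_eq_iff_eq_mul] at ha
    rw [mul_assoc, ← ha, inv_mul_cancel_left]


/-- `m_K^H(θ) = [H_θ : (K ∩ H_θ)H^θ]`. -/
noncomputable def m (θ : MulAut G) (K H : Subgroup G) : ℕ :=
  ((K ⊓ stabSub θ) ⊔ (H ⊓ fixedSub θ)).relIndex (H ⊓ stabSub θ)

variable {V : Type*} [AddCommGroup V] [Module ℂ V]

/-- The space of the induced representation `Ind_K^H ρ`, realized as functions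
`f : H → V` with `f(kh) = ρ(k) f(h)`. -/
noncomputable def IndSpace (K H : Subgroup G) (hKH : K ≤ H) (ρ : ↥K →* (V →ₗ[ℂ] V)) :
    Submodule ℂ (↥H → V) where
  carrier := {f | ∀ (k : ↥K) (h : ↥H),
    f ⟨(k : G) * (h : G), H.mul_mem (hKH k.2) h.2⟩ = ρ k (f h)}
  add_mem' := by
    intro a b ha hb k h
    simp only [Pi.add_apply, ha k h, hb k h, map_add]
  zero_mem' := by intro k h; simp
  smul_mem' := by
    intro c a ha k h
    simp only [Pi.smul_apply, ha k h, map_smul]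

/-- The right-translation action of `s ∈ H` on the induced space. -/
noncomputable def rTrans (K H : Subgroup G) (hKH : K ≤ H) (ρ : ↥K →* (V →ₗ[ℂ] V))
    (s : G) (hs : s ∈ H) (f : ↥(IndSpace K H hKH ρ)) : ↥(IndSpace K H hKH ρ) :=
  ⟨fun h => (f : ↥H → V) ⟨(h : G) * s, H.mul_mem h.2 hs⟩, by
    intro k h
    have h2 : (f : ↥H → V) ⟨(k : G) * ((h : G) * s), H.mul_mem (hKH k.2) (H.mul_mem h.2 hs)⟩
        = ρ k ((f : ↥H → V) ⟨(h : G) * s, H.mul_mem h.2 hs⟩) := f.2 k ⟨(h : G) * s, H.mul_mem h.2 hs⟩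
    simpa [mul_assoc] using h2⟩

/-- `Hom_{H^{θ'}}(Ind_K^H ρ, χ_{θ'})`: linear forms on the induced space which are
`(H^{θ'}, χ_{θ'})`-equivariant for the right-translation action. -/
noncomputable def HomInd (K H : Subgroup G) (hKH : K ≤ H) (ρ : ↥K →* (V →ₗ[ℂ] V))
    (θ' : MulAut G) (c : G → ℂ) :
    Submodule ℂ ((↥(IndSpace K H hKH ρ)) →ₗ[ℂ] ℂ) where
  carrier := {l | ∀ (s : G) (hs : s ∈ H), θ' s = s → ∀ f : ↥(IndSpace K H hKH ρ),
      l (rTrans K H hKH ρ s hs f) = c s * l f}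
  add_mem' := by
    intro a b ha hb s hs hfix f
    simp only [LinearMap.add_apply, ha s hs hfix f, hb s hs hfix f]
    ring
  zero_mem' := by intro s hs hfix f; simp
  smul_mem' := by
    intro r a ha s hs hfix f
    simp only [LinearMap.smul_apply, smul_eq_mul, ha s hs hfix f]
    ring

/-- `Hom_{K ∩ H^{θ'}}(ρ, χ_{θ'})`: linear forms on `V` which are equivariant for
`K ∩ H^{θ'}`. -/
noncomputable def HomK (K H : Subgroup G) (ρ : ↥K →* (V →ₗ[ℂ] V)) (θ' : MulAut G) (c : G → ℂ) :
    Submodule ℂ (V →ₗ[ℂ] ℂ) where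
  carrier := {l | ∀ k : ↥K, (k : G) ∈ H → θ' (k : G) = (k : G) →
      ∀ v : V, l (ρ k v) = c k * l v}
  add_mem' := by
    intro a b ha hb k hkH hk v
    simp only [LinearMap.add_apply, ha k hkH hk v, hb k hkH hk v]
    ring
  zero_mem' := by intro k hkH hk v; simp
  smul_mem' := by
    intro r a ha k hkH hk v
    simp only [LinearMap.smul_apply, smul_eq_mul, ha k hkH hk v]
    ring

section ConjAct

lemma conjAct_apply (g : G) (θ : MulAut G) (x : G) :
    conjAct g θ x = g * θ (g⁻¹ * x * g) * g⁻¹ := rfl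

lemma conjAct_one (θ : MulAut G) : conjAct 1 θ = θ := by
  ext x; simp [conjAct_apply]

lemma conjAct_mul (a b : G) (θ : MulAut G) :
    conjAct (a * b) θ = conjAct a (conjAct b θ) := by
  ext x; simp only [conjAct_apply, map_mul, map_inv, mul_inv_rev]; group

lemma mem_fixedSub_conjAct_iff {g x : G} {θ : MulAut G} :
    x ∈ fixedSub (conjAct g θ) ↔ g⁻¹ * x * g ∈ fixedSub θ := by
  change g * θ (g⁻¹ * x * g) * g⁻¹ = x ↔ θ (g⁻¹ * x * g) = g⁻¹ * x * g
  constructor <;> intro h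
  · calc _ = g⁻¹ * (g * θ (g⁻¹ * x * g) * g⁻¹) * g := by group
      _ = _ := by rw [h]
  · rw [h]; group

lemma conj_mem_fixedSub_conjAct {g x : G} {θ : MulAut G} (hx : x ∈ fixedSub θ) :
    g * x * g⁻¹ ∈ fixedSub (conjAct g θ) := by
  rwa [mem_fixedSub_conjAct_iff, show g⁻¹ * (g * x * g⁻¹) * g = x by group]

lemma conjAct_eq_self_of_mem_fixedSub {θ : MulAut G} {x : G} (hx : x ∈ fixedSub θ) :
    conjAct x θ = θ := by
  ext y
  change x * θ (x⁻¹ * y * x) * x⁻¹ = θ y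
  rw [map_mul, map_mul, map_inv, show θ x = x from hx]
  group

lemma fixedSub_le_stabSub (θ : MulAut G) : fixedSub θ ≤ stabSub θ :=
  fun _ hx => conjAct_eq_self_of_mem_fixedSub hx

lemma stabSub_le_normalizer_fixedSub (θ : MulAut G) :
    stabSub θ ≤ Subgroup.normalizer (fixedSub θ : Set G) := by
  intro g hg
  rw [Subgroup.mem_normalizer_iff]
  intro x
  have hg' : conjAct g θ = θ := hg
  conv_rhs => rw [← hg', mem_fixedSub_conjAct_iff]
  rw [show g⁻¹ * (g * x * g⁻¹) * g = x by group]

end ConjAct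


section Induced

variable (K H : Subgroup G) (hKH : K ≤ H) (ρ : K →* (V →ₗ[ℂ] V))

lemma IndSpace.apply_inclusion_mul (f : IndSpace K H hKH ρ) (k : K) (h : H) :
    f.1 (Subgroup.inclusion hKH k * h) = ρ k (f.1 h) :=
  f.2 k h

open scoped Classical in
noncomputable def IndSpace.single (s : H) : V →ₗ[ℂ] IndSpace K H hKH ρ :=
  LinearMap.codRestrict _ (LinearMap.pi fun h : H =>
      if hc : (h : G) * (s : G)⁻¹ ∈ K then ρ ⟨_, hc⟩ else 0) <| by
    intro v k h
    have hiff : (k : G) * h * (s : G)⁻¹ ∈ K ↔ (h : G) * (s : G)⁻¹ ∈ K := by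
      rw [mul_assoc]; exact K.mul_mem_cancel_left k.2
    simp only [LinearMap.pi_apply]
    by_cases hc : (h : G) * (s : G)⁻¹ ∈ K
    · rw [dif_pos (hiff.mpr hc), dif_pos hc, ← Module.End.mul_apply, ← map_mul]
      congr 2
      ext
      simp [mul_assoc]
    · rw [dif_neg (mt hiff.mp hc), dif_neg hc, LinearMap.zero_apply, map_zero]

lemma IndSpace.single_apply_of_mem {s h : H} (hc : (h : G) * (s : G)⁻¹ ∈ K) (v : V) :
    (IndSpace.single K H hKH ρ s v).1 h = ρ ⟨_, hc⟩ v := by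
  classical
  change (if hc : (h : G) * (s : G)⁻¹ ∈ K then ρ ⟨_, hc⟩ else (0 : V →ₗ[ℂ] V)) v = _
  rw [dif_pos hc]

lemma IndSpace.single_apply_of_not_mem {s h : H} (hc : (h : G) * (s : G)⁻¹ ∉ K) (v : V) :
    (IndSpace.single K H hKH ρ s v).1 h = 0 := by
  classical
  change (if hc : (h : G) * (s : G)⁻¹ ∈ K then ρ ⟨_, hc⟩ else (0 : V →ₗ[ℂ] V)) v = _
  rw [dif_neg hc, LinearMap.zero_apply]

lemma IndSpace.single_inclusion_mul (k : K) (s : H) :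
    IndSpace.single K H hKH ρ (Subgroup.inclusion hKH k * s) =
      IndSpace.single K H hKH ρ s ∘ₗ ρ k⁻¹ := by
  ext v h
  have he : (h : G) * ((Subgroup.inclusion hKH k * s : H) : G)⁻¹ = h * (s : G)⁻¹ * (k⁻¹ : K) := by
    simp [mul_assoc]
  by_cases hc : (h : G) * (s : G)⁻¹ ∈ K
  · have hc' := he ▸ mul_mem hc (k⁻¹).2
    rw [LinearMap.comp_apply, IndSpace.single_apply_of_mem K H hKH ρ hc',
      IndSpace.single_apply_of_mem K H hKH ρ hc, ← Module.End.mul_apply, ← map_mul]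
    congr 2
    exact Subtype.ext he
  · have hc' : (h : G) * ((Subgroup.inclusion hKH k * s : H) : G)⁻¹ ∉ K := by
      rwa [he, K.mul_mem_cancel_right (k⁻¹).2]
    rw [LinearMap.comp_apply, IndSpace.single_apply_of_not_mem K H hKH ρ hc',
      IndSpace.single_apply_of_not_mem K H hKH ρ hc]

lemma IndSpace.single_mul (s t : H) (v : V) :
    IndSpace.single K H hKH ρ (s * t) v =
      rTrans K H hKH ρ (t : G)⁻¹ (inv_mem t.2) (IndSpace.single K H hKH ρ s v) := by
  ext h
  have he : (h : G) * ((s * t : H) : G)⁻¹ = (h * t⁻¹ : H) * (s : G)⁻¹ := by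
    simp [mul_assoc]
  change _ = (IndSpace.single K H hKH ρ s v).1 (h * t⁻¹)
  by_cases hc : (h : G) * ((s * t : H) : G)⁻¹ ∈ K
  · rw [IndSpace.single_apply_of_mem K H hKH ρ hc,
      IndSpace.single_apply_of_mem K H hKH ρ (he ▸ hc)]
    simp only [he]
  · rw [IndSpace.single_apply_of_not_mem K H hKH ρ hc,
      IndSpace.single_apply_of_not_mem K H hKH ρ (he ▸ hc)]

variable [Fintype H] [Fintype K]

lemma IndSpace.sum_apply_single (L : H → V →ₗ[ℂ] ℂ) (s : H) (v : V) :
    ∑ h : H, L h ((IndSpace.single K H hKH ρ s v).1 h) =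
      ∑ k : K, L (Subgroup.inclusion hKH k * s) (ρ k v) := by
  refine (Fintype.sum_of_injective (fun k : K => Subgroup.inclusion hKH k * s) ?_ _ _ ?_ ?_).symm
  · intro k k' hkk'
    simpa using hkk'
  · intro h hh
    rw [IndSpace.single_apply_of_not_mem K H hKH ρ, map_zero]
    exact fun hc => hh ⟨⟨_, hc⟩, by ext; simp⟩
  · intro k
    rw [IndSpace.single_apply_of_mem K H hKH ρ (by simp)]
    congr
    ext
    simp

lemma IndSpace.sum_single (f : IndSpace K H hKH ρ) :
    ∑ h : H, IndSpace.single K H hKH ρ h (f.1 h) = Fintype.card K • f := by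
  ext x
  rw [Submodule.coe_sum, Finset.sum_apply, Submodule.coe_smul_of_tower, Pi.smul_apply,
    ← Finset.card_univ, ← Finset.sum_const]
  refine (Fintype.sum_of_injective (fun k : K => Subgroup.inclusion hKH k⁻¹ * x) ?_ _ _ ?_ ?_).symm
  · intro k k' hkk'
    simpa using hkk'
  · intro h hh
    refine IndSpace.single_apply_of_not_mem K H hKH ρ (fun hc => hh ⟨⟨_, hc⟩, ?_⟩) _
    ext
    simp
  · intro k
    rw [IndSpace.single_apply_of_mem K H hKH ρ (by simp), ← IndSpace.apply_inclusion_mul]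
    exact congrArg f.1 (by ext; simp)

end Induced

section Forms

variable (K H : Subgroup G) (hKH : K ≤ H) (ρ : K →* (V →ₗ[ℂ] V)) (θ : MulAut G) (c : G → ℂ)

-- Written with `c t⁻¹` rather than `(c t)⁻¹`, so that `HomInd.equivForms` needs nothing of `c`.
noncomputable def BiequivariantForms : Submodule ℂ (H → V →ₗ[ℂ] ℂ) where
  carrier := {F | (∀ (k : K) (h : H), F (Subgroup.inclusion hKH k * h) = F h ∘ₗ ρ k⁻¹) ∧
    ∀ h t : H, θ t = t → F (h * t) = c (t : G)⁻¹ • F h}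
  add_mem' := by
    rintro F F' ⟨hF, hF'⟩ ⟨hG, hG'⟩
    refine ⟨fun k h => ?_, fun h t ht => ?_⟩
    · simp [hF k h, hG k h, LinearMap.add_comp]
    · simp [hF' h t ht, hG' h t ht]
  zero_mem' := by simp
  smul_mem' := by
    rintro a F ⟨hF, hF'⟩
    refine ⟨fun k h => ?_, fun h t ht => ?_⟩
    · simp [hF k h, LinearMap.smul_comp]
    · simp [hF' h t ht, smul_comm a]

noncomputable def HomInd.toForms :
    HomInd K H hKH ρ θ c →ₗ[ℂ] BiequivariantForms K H hKH ρ θ c :=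
  LinearMap.codRestrict _
    ((LinearMap.pi fun h => LinearMap.lcomp ℂ ℂ (IndSpace.single K H hKH ρ h)) ∘ₗ
      (HomInd K H hKH ρ θ c).subtype) <| by
    intro l
    refine ⟨fun k h => ?_, fun h t ht => ?_⟩
    · ext v
      simp [IndSpace.single_inclusion_mul]
    · ext v
      have := l.2 (t : G)⁻¹ (inv_mem t.2) (by rw [map_inv, ht]) (IndSpace.single K H hKH ρ h v)
      simpa [IndSpace.single_mul] using this

variable [Fintype H] [Fintype K]

noncomputable def formsPairing : (H → V →ₗ[ℂ] ℂ) →ₗ[ℂ] IndSpace K H hKH ρ →ₗ[ℂ] ℂ :=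
  (Fintype.card K : ℂ)⁻¹ • ∑ h : H,
    LinearMap.lcomp ℂ ℂ (LinearMap.proj h ∘ₗ (IndSpace K H hKH ρ).subtype) ∘ₗ LinearMap.proj h

lemma formsPairing_apply (F : H → V →ₗ[ℂ] ℂ) (f : IndSpace K H hKH ρ) :
    formsPairing K H hKH ρ F f = (Fintype.card K : ℂ)⁻¹ * ∑ h : H, F h (f.1 h) := by
  simp [formsPairing]

lemma formsPairing_mem_homInd {F : H → V →ₗ[ℂ] ℂ} (hF : F ∈ BiequivariantForms K H hKH ρ θ c) :
    formsPairing K H hKH ρ F ∈ HomInd K H hKH ρ θ c := by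
  intro s hs hfix f
  have hshift : ∀ h : H, F (h * (⟨s, hs⟩ : H)⁻¹) = c s • F h := fun h => by
    rw [hF.2 h _ (by simp [hfix]), InvMemClass.coe_inv, inv_inv]
  rw [formsPairing_apply, formsPairing_apply, ← Equiv.sum_comp (Equiv.mulRight (⟨s, hs⟩ : H)⁻¹)]
  simp only [Equiv.coe_mulRight, hshift, LinearMap.smul_apply, smul_eq_mul, ← Finset.mul_sum]
  simp [rTrans, mul_left_comm]

noncomputable def BiequivariantForms.toHomInd :
    BiequivariantForms K H hKH ρ θ c →ₗ[ℂ] HomInd K H hKH ρ θ c :=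
  LinearMap.codRestrict _ (formsPairing K H hKH ρ ∘ₗ (BiequivariantForms K H hKH ρ θ c).subtype)
    fun F => formsPairing_mem_homInd K H hKH ρ θ c F.2

noncomputable def HomInd.equivForms :
    HomInd K H hKH ρ θ c ≃ₗ[ℂ] BiequivariantForms K H hKH ρ θ c :=
  LinearEquiv.ofLinearMap (HomInd.toForms K H hKH ρ θ c) (BiequivariantForms.toHomInd K H hKH ρ θ c)
    (by
      ext F h v
      change formsPairing K H hKH ρ F.1 (IndSpace.single K H hKH ρ h v) = F.1 h v
      simp only [formsPairing_apply, IndSpace.sum_apply_single, F.2.1, LinearMap.comp_apply,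
        ← Module.End.mul_apply, ← map_mul, inv_mul_cancel, map_one, Module.End.one_apply,
        Finset.sum_const, Finset.card_univ, nsmul_eq_mul]
      field_simp)
    (by
      ext l f
      change formsPairing K H hKH ρ (fun h => l.1 ∘ₗ IndSpace.single K H hKH ρ h) f = l.1 f
      simp only [formsPairing_apply, LinearMap.comp_apply, ← map_sum, IndSpace.sum_single,
        map_nsmul, nsmul_eq_mul]
      field_simp)

end Forms

section DoubleCosets

variable (K H : Subgroup G) (hKH : K ≤ H) (θ : MulAut G)

abbrev DoubleCosets : Type _ :=
  DoubleCoset.Quotient (K.subgroupOf H : Set H) ((fixedSub θ).subgroupOf H)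

noncomputable instance [Finite H] : Fintype (DoubleCosets K H θ) :=
  @Fintype.ofFinite _ (Quotient.finite _)

variable {K H θ}

lemma DoubleCosets.mk_inclusion_mul_out_mul (q : DoubleCosets K H θ) (k : K) {t : H}
    (ht : θ t = t) : DoubleCoset.mk _ _ (Subgroup.inclusion hKH k * q.out * t) = q := by
  rw [← DoubleCoset.out_eq' _ _ q, DoubleCoset.eq, DoubleCoset.out_eq']
  refine ⟨(Subgroup.inclusion hKH k)⁻¹, ?_, t⁻¹, ?_, by group⟩
  · simp [Subgroup.mem_subgroupOf]
  · rw [Subgroup.mem_subgroupOf]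
    exact inv_mem ht

variable (θ) in
lemma DoubleCosets.exists_eq_inclusion_mul_out_mul (h : H) :
    ∃ p : DoubleCosets K H θ × K × H, θ p.2.2 = p.2.2 ∧
      h = Subgroup.inclusion hKH p.2.1 * p.1.out * p.2.2 := by
  obtain ⟨a, b, ha, hb, hout⟩ :=
    DoubleCoset.mk_out_eq_mul (K.subgroupOf H) ((fixedSub θ).subgroupOf H) h
  refine ⟨⟨DoubleCoset.mk _ _ h, ⟨a⁻¹, inv_mem ha⟩, b⁻¹⟩, inv_mem hb, ?_⟩
  rw [hout]
  ext
  simp [mul_assoc]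

end DoubleCosets

section Restriction

def IsMulOnFixed (H : Subgroup G) (θ : MulAut G) (c : G → ℂ) : Prop :=
  ∀ a b : G, a ∈ H → θ a = a → b ∈ H → θ b = b → c (a * b) = c a * c b

def IsCompatibleAt (H : Subgroup G) (θ : MulAut G) (χ : MulAut G → G → ℂ) : Prop :=
  ∀ h ∈ H, ∀ t ∈ H, θ t = t → χ (conjAct h θ) (h * t * h⁻¹) = χ θ t

variable {K H : Subgroup G} (hKH : K ≤ H) (ρ : K →* (V →ₗ[ℂ] V)) {θ : MulAut G}
  {χ : MulAut G → G → ℂ}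

lemma BiequivariantForms.apply_mem_homK
    (hcompat : IsCompatibleAt H θ χ)
    {F : H → V →ₗ[ℂ] ℂ} (hF : F ∈ BiequivariantForms K H hKH ρ θ (χ θ)) (s : H) :
    F s ∈ HomK K H ρ (conjAct s θ) (χ (conjAct s θ)) := by
  intro k _ hk v
  set u : H := s⁻¹ * Subgroup.inclusion hKH k * s
  have hu : θ u = u := mem_fixedSub_conjAct_iff.mp hk
  have hsu : Subgroup.inclusion hKH k⁻¹ * s = s * u⁻¹ := by ext; simp [u, mul_assoc]
  have h₁ := LinearMap.congr_fun (hF.1 k⁻¹ s) v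
  rw [hsu, hF.2 s u⁻¹ (by simp [hu])] at h₁
  have h₂ := hcompat s s.2 u u.2 hu
  rw [show (s : G) * u * (s : G)⁻¹ = k by simp [u, mul_assoc]] at h₂
  simpa [h₂] using h₁.symm

lemma HomK.smul_comp_eq_of_mul_eq
    (hmul : IsMulOnFixed H θ (χ θ))
    (hcompat : IsCompatibleAt H θ χ)
    {s : H} {μ : V →ₗ[ℂ] ℂ} (hμ : μ ∈ HomK K H ρ (conjAct s θ) (χ (conjAct s θ)))
    {k k' : K} {t t' : H} (ht : θ t = t) (ht' : θ t' = t')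
    (he : Subgroup.inclusion hKH k * s * t = Subgroup.inclusion hKH k' * s * t') :
    χ θ (t : G)⁻¹ • μ ∘ₗ ρ k⁻¹ = χ θ (t' : G)⁻¹ • μ ∘ₗ ρ k'⁻¹ := by
  have he' : ((k⁻¹ * k' : K) : G) = s * (t * t'⁻¹ : H) * (s : G)⁻¹ := by
    have := congrArg Subtype.val he
    simp only [Subgroup.coe_mul, Subgroup.coe_inclusion] at this
    simp only [Subgroup.coe_mul, InvMemClass.coe_inv, mul_assoc]
    rw [inv_mul_eq_iff_eq_mul, ← mul_assoc, ← mul_assoc, ← mul_assoc, eq_mul_inv_iff_mul_eq,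
      eq_mul_inv_iff_mul_eq, this]
  have hfix : θ (t * t'⁻¹ : H) = (t * t'⁻¹ : H) := by simp [ht, ht']
  have hκ : conjAct (s : G) θ (k⁻¹ * k' : K) = (k⁻¹ * k' : K) := by
    rw [he']; exact conj_mem_fixedSub_conjAct hfix
  have hχ := hcompat s s.2 _ (t * t'⁻¹ : H).2 hfix
  rw [← he'] at hχ
  have hsplit := hmul (t : G)⁻¹ (t * t'⁻¹ : H) (inv_mem t.2) (by simp [ht]) (t * t'⁻¹ : H).2 hfix
  rw [show (t : G)⁻¹ * ((t * t'⁻¹ : H) : G) = (t' : G)⁻¹ by simp] at hsplit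
  ext v
  have h₁ := hμ _ (hKH (k⁻¹ * k').2) hκ (ρ k'⁻¹ v)
  rw [← Module.End.mul_apply, ← map_mul, show k⁻¹ * k' * k'⁻¹ = k⁻¹ by group, hχ] at h₁
  simp only [LinearMap.smul_apply, LinearMap.comp_apply, smul_eq_mul, h₁, hsplit, mul_assoc]

noncomputable def BiequivariantForms.restrict
    (hcompat : IsCompatibleAt H θ χ) :
    BiequivariantForms K H hKH ρ θ (χ θ) →ₗ[ℂ]
      ∀ q : DoubleCosets K H θ, HomK K H ρ (conjAct (q.out : G) θ) (χ (conjAct (q.out : G) θ)) :=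
  LinearMap.pi fun q => LinearMap.codRestrict _
    (LinearMap.proj q.out ∘ₗ (BiequivariantForms K H hKH ρ θ (χ θ)).subtype)
    fun F => BiequivariantForms.apply_mem_homK hKH ρ hcompat F.2 q.out

-- Independent of the chosen decomposition `h = k * q.out * t`,
-- by `extendForms_inclusion_mul_out_mul`.
variable (θ χ) in
noncomputable def extendForms :
    (∀ q : DoubleCosets K H θ, HomK K H ρ (conjAct (q.out : G) θ) (χ (conjAct (q.out : G) θ)))
      →ₗ[ℂ] H → V →ₗ[ℂ] ℂ :=
  LinearMap.pi fun h =>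
    let p := (DoubleCosets.exists_eq_inclusion_mul_out_mul hKH θ h).choose
    χ θ (p.2.2 : G)⁻¹ •
      LinearMap.lcomp ℂ ℂ (ρ p.2.1⁻¹) ∘ₗ Submodule.subtype _ ∘ₗ LinearMap.proj p.1

lemma extendForms_inclusion_mul_out_mul
    (hmul : IsMulOnFixed H θ (χ θ))
    (hcompat : IsCompatibleAt H θ χ)
    (μ : ∀ q : DoubleCosets K H θ,
      HomK K H ρ (conjAct (q.out : G) θ) (χ (conjAct (q.out : G) θ)))
    (q : DoubleCosets K H θ) (k : K) {t : H} (ht : θ t = t) :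
    extendForms hKH ρ θ χ μ (Subgroup.inclusion hKH k * q.out * t) =
      χ θ (t : G)⁻¹ • (μ q).1 ∘ₗ ρ k⁻¹ := by
  have hspec := (DoubleCosets.exists_eq_inclusion_mul_out_mul hKH θ
    (Subgroup.inclusion hKH k * q.out * t)).choose_spec
  simp only [extendForms, LinearMap.pi_apply]
  generalize (DoubleCosets.exists_eq_inclusion_mul_out_mul hKH θ _).choose = p at hspec ⊢
  obtain ⟨q₀, k₀, t₀⟩ := p
  obtain ⟨ht₀, he⟩ := hspec
  obtain rfl : q₀ = q := by
    rw [← DoubleCosets.mk_inclusion_mul_out_mul hKH q k ht, he,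
      DoubleCosets.mk_inclusion_mul_out_mul hKH q₀ k₀ ht₀]
  simp only [LinearMap.smul_apply, LinearMap.comp_apply, LinearMap.lcomp_apply',
    LinearMap.proj_apply, Submodule.subtype_apply]
  exact HomK.smul_comp_eq_of_mul_eq hKH ρ hmul hcompat (μ q₀).2 ht₀ ht he.symm

lemma extendForms_mem
    (hmul : IsMulOnFixed H θ (χ θ))
    (hcompat : IsCompatibleAt H θ χ)
    (μ : ∀ q : DoubleCosets K H θ,
      HomK K H ρ (conjAct (q.out : G) θ) (χ (conjAct (q.out : G) θ))) :
    extendForms hKH ρ θ χ μ ∈ BiequivariantForms K H hKH ρ θ (χ θ) := by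
  refine ⟨fun k' h => ?_, fun h t' ht' => ?_⟩
  · obtain ⟨⟨q, k, t⟩, ht, rfl⟩ := DoubleCosets.exists_eq_inclusion_mul_out_mul hKH θ h
    rw [show Subgroup.inclusion hKH k' * (Subgroup.inclusion hKH k * q.out * t) =
        Subgroup.inclusion hKH (k' * k) * q.out * t by simp [mul_assoc],
      extendForms_inclusion_mul_out_mul hKH ρ hmul hcompat μ q _ ht,
      extendForms_inclusion_mul_out_mul hKH ρ hmul hcompat μ q _ ht]
    ext v
    simp
  · obtain ⟨⟨q, k, t⟩, ht, rfl⟩ := DoubleCosets.exists_eq_inclusion_mul_out_mul hKH θ h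
    have htt' : θ (t * t' : H) = (t * t' : H) := by simp [ht, ht']
    rw [mul_assoc _ t, extendForms_inclusion_mul_out_mul hKH ρ hmul hcompat μ q _ htt',
      extendForms_inclusion_mul_out_mul hKH ρ hmul hcompat μ q _ ht, smul_smul, Subgroup.coe_mul,
      mul_inv_rev, hmul _ _ (inv_mem t'.2) (by simp [ht']) (inv_mem t.2) (by simp [ht])]

lemma BiequivariantForms.apply_inclusion_mul_mul {c : G → ℂ} {F : H → V →ₗ[ℂ] ℂ}
    (hF : F ∈ BiequivariantForms K H hKH ρ θ c) (k : K) (s : H) {t : H} (ht : θ t = t) :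
    F (Subgroup.inclusion hKH k * s * t) = c (t : G)⁻¹ • F s ∘ₗ ρ k⁻¹ := by
  rw [hF.2 _ t ht, hF.1 k s]

noncomputable def BiequivariantForms.equivPi
    (hmul : IsMulOnFixed H θ (χ θ))
    (hone : χ θ 1 = 1)
    (hcompat : IsCompatibleAt H θ χ) :
    BiequivariantForms K H hKH ρ θ (χ θ) ≃ₗ[ℂ]
      ∀ q : DoubleCosets K H θ, HomK K H ρ (conjAct (q.out : G) θ) (χ (conjAct (q.out : G) θ)) :=
  LinearEquiv.ofLinearMap (BiequivariantForms.restrict hKH ρ hcompat)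
    (LinearMap.codRestrict _ (extendForms hKH ρ θ χ) (extendForms_mem hKH ρ hmul hcompat))
    (by
      ext μ q v
      change extendForms hKH ρ θ χ μ q.out v = (μ q).1 v
      have h := extendForms_inclusion_mul_out_mul hKH ρ hmul hcompat μ q 1 (t := 1) (map_one θ)
      simp only [map_one, mul_one, one_mul, OneMemClass.coe_one, inv_one, hone, one_smul] at h
      simp [h])
    (by
      ext F h v
      obtain ⟨⟨q, k, t⟩, ht, rfl⟩ := DoubleCosets.exists_eq_inclusion_mul_out_mul hKH θ h
      change extendForms hKH ρ θ χ _ _ v = F.1 _ v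
      rw [extendForms_inclusion_mul_out_mul hKH ρ hmul hcompat _ q k ht,
        BiequivariantForms.apply_inclusion_mul_mul hKH ρ F.2 k q.out ht]
      rfl)

end Restriction

section Counting

variable {K H : Subgroup G} {θ : MulAut G}

lemma DoubleCosets.exists_conjAct_out_mk (s : H) :
    ∃ k ∈ K, conjAct ((DoubleCoset.mk _ _ s : DoubleCosets K H θ).out : G) θ =
      conjAct k (conjAct s θ) := by
  obtain ⟨a, b, ha, hb, hout⟩ :=
    DoubleCoset.mk_out_eq_mul (K.subgroupOf H) ((fixedSub θ).subgroupOf H) s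
  refine ⟨a, ha, ?_⟩
  rw [hout, Subgroup.coe_mul, Subgroup.coe_mul, conjAct_mul, conjAct_mul,
    conjAct_eq_self_of_mem_fixedSub (x := (b : G)) hb]

variable {ψ : MulAut G} {h₀ : H}

-- Induces the bijection `H_ψ / (K ∩ H_ψ) H^ψ ≃ {q | ψ ∈ K · (q.out · θ)}` counted by `m`.
variable (K θ h₀) in
noncomputable def DoubleCosets.ofStab (w : ↥(H ⊓ stabSub ψ)) : DoubleCosets K H θ :=
  DoubleCoset.mk _ _ ((⟨w, (Subgroup.mem_inf.mp w.2).1⟩ : H)⁻¹ * h₀)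

lemma DoubleCosets.exists_conjAct_out_ofStab (hψ : conjAct (h₀ : G) θ = ψ)
    (w : ↥(H ⊓ stabSub ψ)) :
    ∃ k ∈ K, ψ = conjAct k (conjAct ((ofStab K θ h₀ w).out : G) θ) := by
  obtain ⟨k, hk, hout⟩ := DoubleCosets.exists_conjAct_out_mk (θ := θ)
    ((⟨w, (Subgroup.mem_inf.mp w.2).1⟩ : H)⁻¹ * h₀)
  refine ⟨k⁻¹, inv_mem hk, ?_⟩
  rw [DoubleCosets.ofStab, hout, ← conjAct_mul, inv_mul_cancel, conjAct_one, Subgroup.coe_mul,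
    conjAct_mul, hψ]
  exact (inv_mem (Subgroup.mem_inf.mp w.2).2).symm

lemma DoubleCosets.exists_ofStab_eq (hKH : K ≤ H) (hψ : conjAct (h₀ : G) θ = ψ)
    {q : DoubleCosets K H θ} {k : G} (hk : k ∈ K)
    (hq : ψ = conjAct k (conjAct (q.out : G) θ)) :
    ∃ w : ↥(H ⊓ stabSub ψ), ofStab K θ h₀ w = q := by
  have hwH : (h₀ : G) * (q.out : G)⁻¹ * k⁻¹ ∈ H :=
    mul_mem (mul_mem h₀.2 (inv_mem q.out.2)) (inv_mem (hKH hk))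
  have hws : (h₀ : G) * (q.out : G)⁻¹ * k⁻¹ ∈ stabSub ψ := by
    change conjAct _ _ = _
    conv_lhs => rw [hq, ← conjAct_mul, ← conjAct_mul]
    rw [← hψ]
    group
  refine ⟨⟨_, Subgroup.mem_inf.mpr ⟨hwH, hws⟩⟩, ?_⟩
  refine Eq.trans ?_ (DoubleCosets.mk_inclusion_mul_out_mul hKH q ⟨k, hk⟩ (t := 1) (map_one θ))
  rw [DoubleCosets.ofStab]
  congr 1
  ext
  simp [mul_assoc]

lemma inf_stabSub_le_normalizer_inf_fixedSub (hKH : K ≤ H) (ψ : MulAut G) :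
    K ⊓ stabSub ψ ≤ Subgroup.normalizer ((H ⊓ fixedSub ψ : Subgroup G) : Set G) :=
  (inf_le_inf (hKH.trans Subgroup.le_normalizer) (stabSub_le_normalizer_fixedSub ψ)).trans
    Subgroup.inf_normalizer_le_normalizer_inf

lemma DoubleCosets.inv_mul_mem_of_ofStab_eq (hψ : conjAct (h₀ : G) θ = ψ)
    {w w' : ↥(H ⊓ stabSub ψ)} (he : ofStab K θ h₀ w = ofStab K θ h₀ w') :
    (w : G)⁻¹ * w' ∈ (K ⊓ stabSub ψ) ⊔ (H ⊓ fixedSub ψ) := by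
  obtain ⟨hwH, hws⟩ := Subgroup.mem_inf.mp w.2
  obtain ⟨x, hx, y, hy, he⟩ := (DoubleCoset.eq _ _ _ _).mp he
  replace he : (w' : G)⁻¹ * h₀ = x * ((w : G)⁻¹ * h₀) * y := by
    simpa using congrArg Subtype.val he
  set v := (w : G)⁻¹ * (h₀ * (y : G)⁻¹ * (h₀ : G)⁻¹) * w with hv
  have hvH : v ∈ H := mul_mem (mul_mem (inv_mem hwH) (mul_mem (mul_mem h₀.2 (inv_mem y.2))
    (inv_mem h₀.2))) hwH
  have hvψ : v ∈ fixedSub ψ := by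
    have := conj_mem_fixedSub_conjAct (g := (h₀ : G)) (inv_mem (x := (y : G)) hy)
    rw [hψ] at this
    simpa using (Subgroup.mem_normalizer_iff.mp (stabSub_le_normalizer_fixedSub ψ (inv_mem hws))
      _).mp this
  have hwv : (w : G)⁻¹ * w' = v * (x : G)⁻¹ := by
    have : (w' : G) = ((x : G) * ((w : G)⁻¹ * h₀) * y * (h₀ : G)⁻¹)⁻¹ := by
      rw [← he]; group
    rw [this, hv]
    group
  have hxψ : (x : G)⁻¹ ∈ stabSub ψ := by
    rw [show (x : G)⁻¹ = v⁻¹ * ((w : G)⁻¹ * w') by rw [hwv]; group]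
    exact mul_mem (inv_mem (fixedSub_le_stabSub ψ hvψ))
      (mul_mem (inv_mem hws) (Subgroup.mem_inf.mp w'.2).2)
  rw [hwv]
  exact mul_mem (Subgroup.mem_sup_right (Subgroup.mem_inf.mpr ⟨hvH, hvψ⟩))
    (Subgroup.mem_sup_left (Subgroup.mem_inf.mpr ⟨inv_mem hx, hxψ⟩))

lemma DoubleCosets.ofStab_eq_of_inv_mul_mem (hKH : K ≤ H) (hψ : conjAct (h₀ : G) θ = ψ)
    {w w' : ↥(H ⊓ stabSub ψ)} (hJ : (w : G)⁻¹ * w' ∈ (K ⊓ stabSub ψ) ⊔ (H ⊓ fixedSub ψ)) :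
    ofStab K θ h₀ w = ofStab K θ h₀ w' := by
  obtain ⟨hwH, hws⟩ := Subgroup.mem_inf.mp w.2
  rw [← SetLike.mem_coe, Subgroup.coe_mul_of_left_le_normalizer_right _ _
    (inf_stabSub_le_normalizer_inf_fixedSub hKH ψ), Set.mem_mul] at hJ
  obtain ⟨κ, hκ, u, hu, hκu⟩ := hJ
  obtain ⟨hκK, hκψ⟩ := Subgroup.mem_inf.mp hκ
  obtain ⟨huH, huψ⟩ := Subgroup.mem_inf.mp hu
  set z := (w : G) * κ * u⁻¹ * ((w : G) * κ)⁻¹ with hz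
  have hzH : z ∈ H := mul_mem (mul_mem (mul_mem hwH (hKH hκK)) (inv_mem huH))
    (inv_mem (mul_mem hwH (hKH hκK)))
  have hzψ : z ∈ fixedSub ψ := (Subgroup.mem_normalizer_iff.mp
    (stabSub_le_normalizer_fixedSub ψ (mul_mem hws hκψ)) _).mp (inv_mem huψ)
  rw [← hψ, mem_fixedSub_conjAct_iff] at hzψ
  rw [DoubleCosets.ofStab, DoubleCosets.ofStab, DoubleCoset.eq]
  refine ⟨⟨κ⁻¹, inv_mem (hKH hκK)⟩, inv_mem hκK,
    ⟨(h₀ : G)⁻¹ * z * h₀, mul_mem (mul_mem (inv_mem h₀.2) hzH) h₀.2⟩, hzψ, ?_⟩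
  have hw' : (w' : G) = w * (κ * u) := by rw [hκu]; group
  ext
  simp only [Subgroup.coe_mul, InvMemClass.coe_inv, hw', hz]
  group

lemma card_doubleCosets_conjAct_eq (hKH : K ≤ H) (hψ : conjAct (h₀ : G) θ = ψ) :
    Nat.card {q : DoubleCosets K H θ // ∃ k ∈ K, ψ = conjAct k (conjAct (q.out : G) θ)} =
      m ψ K H := by
  let J := ((K ⊓ stabSub ψ) ⊔ (H ⊓ fixedSub ψ)).subgroupOf (H ⊓ stabSub ψ)
  have hrel : ∀ w w', QuotientGroup.leftRel J w w' ↔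
      DoubleCosets.ofStab K θ h₀ w = DoubleCosets.ofStab K θ h₀ w' := fun w w' => by
    rw [QuotientGroup.leftRel_apply, Subgroup.mem_subgroupOf]
    exact ⟨DoubleCosets.ofStab_eq_of_inv_mul_mem hKH hψ, DoubleCosets.inv_mul_mem_of_ofStab_eq hψ⟩
  let e : (↥(H ⊓ stabSub ψ) ⧸ J) ≃
      {q : DoubleCosets K H θ // ∃ k ∈ K, ψ = conjAct k (conjAct (q.out : G) θ)} :=
    Equiv.ofBijective
      (Quotient.lift (fun w => ⟨_, DoubleCosets.exists_conjAct_out_ofStab hψ w⟩)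
        fun w w' h => Subtype.ext ((hrel w w').mp h))
      ⟨fun a b => Quotient.inductionOn₂ a b fun w w' h =>
          Quotient.sound ((hrel w w').mpr (congrArg Subtype.val h)),
        fun ⟨_, _, hk, hq⟩ =>
          let ⟨w, hw⟩ := DoubleCosets.exists_ofStab_eq hKH hψ hk hq
          ⟨⟦w⟧, Subtype.ext hw⟩⟩
  exact (Nat.card_congr e).symm

end Counting

section OrbitInvariance

variable {K H : Subgroup G} (ρ : K →* (V →ₗ[ℂ] V))

lemma HomK.comp_mem_of_mem_conjAct (hKH : K ≤ H) {φ : MulAut G} {c c' : G → ℂ} (k : K)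
    (hc : ∀ x ∈ H, φ x = x → c' (k * x * (k : G)⁻¹) = c x) {μ : V →ₗ[ℂ] ℂ}
    (hμ : μ ∈ HomK K H ρ (conjAct k φ) c') : μ ∘ₗ ρ k ∈ HomK K H ρ φ c := by
  intro a haH ha v
  have h := hμ (k * a * k⁻¹) (mul_mem (mul_mem (hKH k.2) haH) (inv_mem (hKH k.2)))
    (conj_mem_fixedSub_conjAct ha) (ρ k v)
  rw [← Module.End.mul_apply, ← map_mul, show k * a * k⁻¹ * k = k * a by group, map_mul] at h
  simpa [hc a haH ha] using h

lemma HomK.comp_mem_conjAct_of_mem (hKH : K ≤ H) {φ : MulAut G} {c c' : G → ℂ} (k : K)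
    (hc : ∀ x ∈ H, φ x = x → c' (k * x * (k : G)⁻¹) = c x) {ν : V →ₗ[ℂ] ℂ}
    (hν : ν ∈ HomK K H ρ φ c) : ν ∘ₗ ρ k⁻¹ ∈ HomK K H ρ (conjAct k φ) c' := by
  intro b hbH hb v
  have hfix : φ (k⁻¹ * b * k : K) = (k⁻¹ * b * k : K) := mem_fixedSub_conjAct_iff.mp hb
  have hH : ((k⁻¹ * b * k : K) : G) ∈ H := hKH (k⁻¹ * b * k).2
  have h := hν (k⁻¹ * b * k) hH hfix (ρ k⁻¹ v)
  rw [← Module.End.mul_apply, ← map_mul, show k⁻¹ * b * k * k⁻¹ = k⁻¹ * b by group, map_mul,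
    ← hc _ hH hfix] at h
  simpa [mul_assoc] using h

lemma finrank_homK_conjAct (hKH : K ≤ H) {φ : MulAut G} {c c' : G → ℂ} (k : K)
    (hc : ∀ x ∈ H, φ x = x → c' (k * x * (k : G)⁻¹) = c x) :
    Module.finrank ℂ (HomK K H ρ (conjAct k φ) c') = Module.finrank ℂ (HomK K H ρ φ c) :=
  LinearEquiv.finrank_eq <| LinearEquiv.ofLinearMap
    (LinearMap.codRestrict _ (LinearMap.lcomp ℂ ℂ (ρ k) ∘ₗ Submodule.subtype _)
      fun μ => HomK.comp_mem_of_mem_conjAct ρ hKH k hc μ.2)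
    (LinearMap.codRestrict _ (LinearMap.lcomp ℂ ℂ (ρ k⁻¹) ∘ₗ Submodule.subtype _)
      fun ν => HomK.comp_mem_conjAct_of_mem ρ hKH k hc ν.2)
    (by
      ext ν v
      change ν.1 (ρ k⁻¹ (ρ k v)) = ν.1 v
      rw [← Module.End.mul_apply, ← map_mul, inv_mul_cancel, map_one, Module.End.one_apply])
    (by
      ext μ v
      change μ.1 (ρ k (ρ k⁻¹ v)) = μ.1 v
      rw [← Module.End.mul_apply, ← map_mul, mul_inv_cancel, map_one, Module.End.one_apply])

lemma conjAct_compat_of_compat {θ : MulAut G} {χ : MulAut G → G → ℂ}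
    (hcompat : IsCompatibleAt H θ χ)
    {k s : G} (hk : k ∈ H) (hs : s ∈ H) (x : G) (hx : x ∈ H) (hfix : conjAct s θ x = x) :
    χ (conjAct k (conjAct s θ)) (k * x * k⁻¹) = χ (conjAct s θ) x := by
  have ht : θ (s⁻¹ * x * s) = s⁻¹ * x * s := mem_fixedSub_conjAct_iff.mp hfix
  have htH : s⁻¹ * x * s ∈ H := mul_mem (mul_mem (inv_mem hs) hx) hs
  have h₁ := hcompat (k * s) (mul_mem hk hs) _ htH ht
  have h₂ := hcompat s hs _ htH ht
  rw [conjAct_mul, show k * s * (s⁻¹ * x * s) * (k * s)⁻¹ = k * x * k⁻¹ by group] at h₁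
  rw [show s * (s⁻¹ * x * s) * s⁻¹ = x by group] at h₂
  rw [h₁, h₂]

lemma sum_finrank_homK_doubleCosets_eq [Finite H] (hKH : K ≤ H) {θ : MulAut G}
    {χ : MulAut G → G → ℂ}
    (hcompat : IsCompatibleAt H θ χ)
    (R : Finset (MulAut G)) (hRsub : ∀ ψ ∈ R, ∃ h ∈ H, ψ = conjAct h θ)
    (hR : ∀ q : DoubleCosets K H θ, ∃! ψ, ψ ∈ R ∧ ∃ k ∈ K, ψ = conjAct k (conjAct (q.out : G) θ)) :
    ∑ q : DoubleCosets K H θ,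
        Module.finrank ℂ (HomK K H ρ (conjAct (q.out : G) θ) (χ (conjAct (q.out : G) θ))) =
      ∑ ψ ∈ R, m ψ K H * Module.finrank ℂ (HomK K H ρ ψ (χ ψ)) := by
  classical
  calc _ = ∑ q : DoubleCosets K H θ, ∑ ψ ∈ R,
        if ∃ k ∈ K, ψ = conjAct k (conjAct (q.out : G) θ)
          then Module.finrank ℂ (HomK K H ρ ψ (χ ψ)) else 0 := by
        refine Finset.sum_congr rfl fun q _ => ?_
        obtain ⟨ψ, ⟨hψR, k, hk, rfl⟩, huniq⟩ := hR q
        rw [Finset.sum_eq_single_of_mem _ hψR fun ψ' hψ' hne =>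
            if_neg fun h => hne (huniq ψ' ⟨hψ', h⟩),
          if_pos ⟨k, hk, rfl⟩, finrank_homK_conjAct ρ hKH ⟨k, hk⟩
            (conjAct_compat_of_compat hcompat (hKH hk) q.out.2)]
    _ = ∑ ψ ∈ R, m ψ K H * Module.finrank ℂ (HomK K H ρ ψ (χ ψ)) := by
        rw [Finset.sum_comm]
        refine Finset.sum_congr rfl fun ψ hψ => ?_
        obtain ⟨h₀, h₀H, rfl⟩ := hRsub ψ hψ
        rw [Finset.sum_ite, Finset.sum_const_zero, add_zero, Finset.sum_const, smul_eq_mul,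
          ← Fintype.card_subtype, ← Nat.card_eq_fintype_card,
          card_doubleCosets_conjAct_eq (h₀ := ⟨h₀, h₀H⟩) hKH rfl]

end OrbitInvariance


theorem mackey_with_involutions_general [Fintype G] [FiniteDimensional ℂ V]
    (K H : Subgroup G) (hKH : K ≤ H) (ρ : ↥K →* (V →ₗ[ℂ] V))
    (θ : MulAut G)
    (χ : MulAut G → G → ℂ)
    (hchar : ∀ φ ∈ {ψ : MulAut G | ∃ h ∈ H, ψ = conjAct h θ}, ∀ a b : G,
      a ∈ H → φ a = a → b ∈ H → φ b = b →
        χ φ (a * b) = χ φ a * χ φ b ∧ χ φ a ≠ 0)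
    (hcompat : ∀ φ ∈ {ψ : MulAut G | ∃ h ∈ H, ψ = conjAct h θ}, ∀ h ∈ H, ∀ k ∈ H, φ k = k →
        χ (conjAct h φ) (h * k * h⁻¹) = χ φ k)
    (R : Finset (MulAut G))
    (hRsub : ∀ ψ ∈ R, ψ ∈ {ψ' : MulAut G | ∃ h ∈ H, ψ' = conjAct h θ})
    (hR : ∀ φ ∈ {ψ : MulAut G | ∃ h ∈ H, ψ = conjAct h θ},
      ∃! ψ, ψ ∈ R ∧ ∃ k ∈ K, ψ = conjAct k φ) :
    Module.finrank ℂ ↥(HomInd K H hKH ρ θ (χ θ))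
      = ∑ ψ ∈ R, m ψ K H * Module.finrank ℂ ↥(HomK K H ρ ψ (χ ψ)) := by
  classical
  have hθ : θ ∈ {ψ : MulAut G | ∃ h ∈ H, ψ = conjAct h θ} := ⟨1, one_mem H, (conjAct_one θ).symm⟩
  have hmul : IsMulOnFixed H θ (χ θ) := fun a b ha hfa hb hfb => (hchar θ hθ a b ha hfa hb hfb).1
  have hone : χ θ 1 = 1 := by
    obtain ⟨h, hne⟩ := hchar θ hθ 1 1 (one_mem H) (map_one θ) (one_mem H) (map_one θ)
    rw [one_mul, eq_comm, mul_eq_left₀ hne] at h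
    exact h
  rw [(HomInd.equivForms K H hKH ρ θ (χ θ)).finrank_eq,
    (BiequivariantForms.equivPi hKH ρ hmul hone (hcompat θ hθ)).finrank_eq,
    Module.finrank_pi_fintype]
  exact sum_finrank_homK_doubleCosets_eq ρ hKH (hcompat θ hθ) R hRsub
    fun q => hR _ ⟨q.out, q.out.2, rfl⟩

/-- **Mackey formula with involutions.**  Let `K ⊆ H` be subgroups of a finite group `G`,
`ρ` an irreducible complex representation of `K`, `ϑ` the `H`-orbit of an order-two
automorphism `θ` of `G`, and `χ` a compatible family of characters `χ_{θ'} : H^{θ'} → ℂ×`.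
Then for any set `R` of representatives of the `K`-orbits contained in `ϑ`,
`dim Hom_{H^θ}(Ind_K^H ρ, χ_θ) = Σ_{θ'∈R} m_K^H(θ') · dim Hom_{K ∩ H^{θ'}}(ρ, χ_{θ'})`,
where `m_K^H(θ') = [H_{θ'} : (K ∩ H_{θ'})H^{θ'}]`. -/
theorem mackey_with_involutions [Fintype G] [FiniteDimensional ℂ V]
    (K H : Subgroup G) (hKH : K ≤ H) (ρ : ↥K →* (V →ₗ[ℂ] V))
    (hV : Nontrivial V)
    (hirr : ∀ W : Submodule ℂ V, (∀ (k : ↥K), ∀ w ∈ W, ρ k w ∈ W) → W = ⊥ ∨ W = ⊤)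
    (θ : MulAut G) (hθ : θ * θ = 1)
    (χ : MulAut G → G → ℂ)
    (hchar : ∀ φ ∈ {ψ : MulAut G | ∃ h ∈ H, ψ = conjAct h θ}, ∀ a b : G,
      a ∈ H → φ a = a → b ∈ H → φ b = b →
        χ φ (a * b) = χ φ a * χ φ b ∧ χ φ a ≠ 0)
    (hcompat : ∀ φ ∈ {ψ : MulAut G | ∃ h ∈ H, ψ = conjAct h θ}, ∀ h ∈ H, ∀ k ∈ H, φ k = k →
        χ (conjAct h φ) (h * k * h⁻¹) = χ φ k)
    (R : Finset (MulAut G))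
    (hRsub : ∀ ψ ∈ R, ψ ∈ {ψ' : MulAut G | ∃ h ∈ H, ψ' = conjAct h θ})
    (hR : ∀ φ ∈ {ψ : MulAut G | ∃ h ∈ H, ψ = conjAct h θ},
      ∃! ψ, ψ ∈ R ∧ ∃ k ∈ K, ψ = conjAct k φ) :
    Module.finrank ℂ ↥(HomInd K H hKH ρ θ (χ θ))
      = ∑ ψ ∈ R, m ψ K H * Module.finrank ℂ ↥(HomK K H ρ ψ (χ ψ)) :=
  mackey_with_involutions_general K H hKH ρ θ χ hchar hcompat R hRsub hR

end Stmt7
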